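/- Let k ≥ 2, p = p_1 + ... + p_k, and let Σ ∈ R^{p×p} be the block matrix with diagonal blocks Σ_{ii} = U_i U_i^T + Ψ_{ii} and off-diagonal blocks Σ_{ij} = U_i U_j^T (i ≠ j), where U_i ∈ R^{p_i×r}, each Ψ_{ii} is symmetric positive definite, and Σ0 = diag(Σ_{11},...,Σ_{kk}). Let U = [U_1^T, ..., U_k^T]^T ∈ R^{p×r}. Assume (a) rank(U) = r, and (b) σ_r(Σ0^{-1/2} U) ≥ 1, where σ_r denotes the r-th largest singular value. Then exactly r of the generalized eigenvalues λ_1 ≥ ... ≥ λ_p of Σ with respect to Σ0 are strictly greater than 1, i.e. r = max{ j ∈ [p] : λ_j > 1 }. -/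

import Mathlib

open MeasureTheory ProbabilityTheory Matrix Real
open scoped Classical

noncomputable section

/-- Frobenius norm of a real matrix. -/
def frob {m n : ℕ} (M : Matrix (Fin m) (Fin n) ℝ) : ℝ :=
  Real.sqrt (∑ i, ∑ j, (M i j) ^ 2)

/-- Distance between `p × r` matrices modulo right multiplication by an orthogonal matrix:
`dist(U,V) = min_{P ∈ O(r)} ‖U P - V‖_F`. -/
def gdist {p r : ℕ} (U V : Matrix (Fin p) (Fin r) ℝ) : ℝ :=
  sInf {x : ℝ | ∃ P : Matrix (Fin r) (Fin r) ℝ, Pᵀ * P = 1 ∧ x = frob (U * P - V)}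

/-- Centered multivariate Gaussian with covariance `S`, as the law of `S^{1/2} z` for a
standard Gaussian vector `z`. -/
def mvGaussian {m : ℕ} (S : Matrix (Fin m) (Fin m) ℝ) : Measure (Fin m → ℝ) :=
  if h : S.PosSemidef then
    (Measure.pi fun _ : Fin m => gaussianReal 0 1).map fun z => ((h.1.eigenvectorUnitary : Matrix (Fin m) (Fin m) ℝ) *
      Matrix.diagonal (fun i => Real.sqrt (h.1.eigenvalues i)) *
      (star h.1.eigenvectorUnitary : Matrix (Fin m) (Fin m) ℝ)).mulVec z
  else 0

/-- Law of `n` i.i.d. samples from `N_m(0, S)`. -/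
def iidLaw (n : ℕ) {m : ℕ} (S : Matrix (Fin m) (Fin m) ℝ) : Measure (Fin n → Fin m → ℝ) :=
  Measure.pi fun _ : Fin n => mvGaussian S

def sampleMean {n m : ℕ} (X : Fin n → Fin m → ℝ) (i : Fin m) : ℝ := (∑ t, X t i) / n

/-- Sample covariance matrix. -/
def sampleCov {n m : ℕ} (X : Fin n → Fin m → ℝ) : Matrix (Fin m) (Fin m) ℝ :=
  Matrix.of fun i j => (∑ t, (X t i - sampleMean X i) * (X t j - sampleMean X j)) / n

/-- Block-diagonal part of a matrix with respect to block labels `β`. -/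
def blockPart {m k : ℕ} (β : Fin m → Fin k) (M : Matrix (Fin m) (Fin m) ℝ) :
    Matrix (Fin m) (Fin m) ℝ :=
  Matrix.of fun i j => if β i = β j then M i j else 0

/-- Rows of `M` belonging to block `i`, all other rows zeroed out. -/
def restrictRows {m k c : ℕ} (β : Fin m → Fin k) (i : Fin k) (M : Matrix (Fin m) (Fin c) ℝ) :
    Matrix (Fin m) (Fin c) ℝ :=
  Matrix.of fun a b => if β a = i then M a b else 0

/-- ℓ₂ norm of row `i` of `M`. -/
def rowNorm {m r : ℕ} (M : Matrix (Fin m) (Fin r) ℝ) (i : Fin m) : ℝ :=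
  Real.sqrt (∑ j, (M i j) ^ 2)

/-- Set of indices of nonzero rows. -/
def rowSupport {m r : ℕ} (M : Matrix (Fin m) (Fin r) ℝ) : Set (Fin m) := {i | M i ≠ 0}

/-- `W'` is the hard thresholding of `W` keeping the `k` rows of largest ℓ₂ norm
(ties broken toward smaller indices). -/
def IsHT {m r : ℕ} (W : Matrix (Fin m) (Fin r) ℝ) (k : ℕ) (W' : Matrix (Fin m) (Fin r) ℝ) : Prop :=
  ∃ C : Finset (Fin m), C.card = min k m ∧ (∀ i ∈ C, W' i = W i) ∧ (∀ i ∉ C, W' i = 0) ∧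
    ∀ i ∈ C, ∀ j ∉ C, rowNorm W j < rowNorm W i ∨ (rowNorm W j = rowNorm W i ∧ i < j)

/-- Positive semidefinite square root (junk value `0` if not psd). -/
def psqrt {r : ℕ} (M : Matrix (Fin r) (Fin r) ℝ) : Matrix (Fin r) (Fin r) ℝ :=
  if h : M.PosSemidef then
    (h.1.eigenvectorUnitary : Matrix (Fin r) (Fin r) ℝ) *
      Matrix.diagonal (fun i => Real.sqrt (h.1.eigenvalues i)) *
      (star h.1.eigenvectorUnitary : Matrix (Fin r) (Fin r) ℝ)
  else 0

/-- Inverse square root. -/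
def invSqrt {r : ℕ} (M : Matrix (Fin r) (Fin r) ℝ) : Matrix (Fin r) (Fin r) ℝ := (psqrt M)⁻¹

/-- Nuclear norm `Tr √(Mᵀ M)`. -/
def nucNorm {a b : ℕ} (M : Matrix (Fin a) (Fin b) ℝ) : ℝ := (psqrt (Mᵀ * M)).trace

/-- Entrywise ℓ₁ norm. -/
def l1Norm {a b : ℕ} (M : Matrix (Fin a) (Fin b) ℝ) : ℝ := ∑ i, ∑ j, |M i j|

/-- Entrywise sup norm. -/
def maxAbs {a b : ℕ} (M : Matrix (Fin a) (Fin b) ℝ) : ℝ := sSup {x : ℝ | ∃ i j, x = |M i j|}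

/-- Membership in the Fantope `{X : 0 ⪯ X ⪯ I, Tr X = r}`. -/
def InFantope {p : ℕ} (r : ℕ) (X : Matrix (Fin p) (Fin p) ℝ) : Prop :=
  X.PosSemidef ∧ (1 - X).PosSemidef ∧ X.trace = (r : ℝ)

/-- `F` minimizes `-⟨Sh, ·⟩ + ρ ‖·‖_1` over symmetric matrices whose conjugation by
`S0h^{1/2}` lies in the Fantope. -/
def IsFantopeMin {p : ℕ} (r : ℕ) (Sh S0h : Matrix (Fin p) (Fin p) ℝ) (ρ : ℝ)
    (F : Matrix (Fin p) (Fin p) ℝ) : Prop :=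
  F.IsSymm ∧ InFantope r (psqrt S0h * F * psqrt S0h) ∧
    ∀ G : Matrix (Fin p) (Fin p) ℝ, G.IsSymm → InFantope r (psqrt S0h * G * psqrt S0h) →
      -(Shᵀ * F).trace + ρ * l1Norm F ≤ -(Shᵀ * G).trace + ρ * l1Norm G

/-- `L` maximizes `⟨Sh, L Lᵀ⟩` subject to `Lᵀ S0h L = I_r` and row support inside `I`. -/
def IsRestrictedMax {p r : ℕ} (Sh S0h : Matrix (Fin p) (Fin p) ℝ) (I : Finset (Fin p))
    (L : Matrix (Fin p) (Fin r) ℝ) : Prop :=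
  Lᵀ * S0h * L = 1 ∧ (∀ i ∉ I, L i = 0) ∧
    ∀ L' : Matrix (Fin p) (Fin r) ℝ, L'ᵀ * S0h * L' = 1 → (∀ i ∉ I, L' i = 0) →
      (Shᵀ * (L' * L'ᵀ)).trace ≤ (Shᵀ * (L * Lᵀ)).trace

/-- Kullback–Leibler divergence `∫ log (dP/dQ) dP`. -/
def klDivR {α : Type*} [MeasurableSpace α] (P Q : Measure α) : ℝ :=
  ∫ x, Real.log (P.rnDeriv Q x).toReal ∂P

/-!
Writing `x = K c`, the quadratic forms of the pencil become `xᵀ S0 x = ∑ c_i²` and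
`xᵀ S x = ∑ λ_i c_i²`, so by a Courant–Fischer dimension count `λ_j > 1` for `j < r` once
`S ≻ S0` on an `r`-dimensional space, and `λ_j ≤ 1` for `j ≥ r` once `S ⪯ S0` on a space of
codimension `r`. The first space is `S0⁻¹ (range U)`, by assumption (b) and Cauchy–Schwarz; the
second is `ker Uᵀ`, since `S0 - S = blockPart β (U Uᵀ) - U Uᵀ` and `blockPart β (U Uᵀ) ⪰ 0`.
-/

namespace Matrix

variable {m n : Type*} [Fintype m] [Fintype n]

theorem dotProduct_transpose_mul_mul_mulVec (K : Matrix m n ℝ) (M : Matrix m m ℝ) (c : n → ℝ) :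
    c ⬝ᵥ (Kᵀ * M * K) *ᵥ c = K *ᵥ c ⬝ᵥ M *ᵥ (K *ᵥ c) := by
  rw [Matrix.mul_assoc, ← mulVec_mulVec, dotProduct_transpose_mulVec, dotProduct_comm,
    ← mulVec_mulVec]

theorem dotProduct_mul_transpose_mulVec (V : Matrix m n ℝ) (x : m → ℝ) :
    x ⬝ᵥ (V * Vᵀ) *ᵥ x = Vᵀ *ᵥ x ⬝ᵥ Vᵀ *ᵥ x := by
  rw [← mulVec_mulVec, dotProduct_transpose_mulVec, dotProduct_comm]

theorem dotProduct_diagonal_mulVec [DecidableEq n] (d c : n → ℝ) :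
    c ⬝ᵥ diagonal d *ᵥ c = ∑ i, d i * c i ^ 2 := by
  simp only [dotProduct, mulVec_diagonal]
  exact Finset.sum_congr rfl fun i _ => by ring

theorem dotProduct_self_eq_sum_sq (v : n → ℝ) : v ⬝ᵥ v = ∑ i, v i ^ 2 := by
  simp only [dotProduct, sq]

/-- Cauchy–Schwarz: `(uᵀAu)² ≤ ‖u‖²‖Au‖² ≤ (uᵀAu)‖Au‖²`. -/
theorem dotProduct_mulVec_le_sum_sq_mulVec {A : Matrix n n ℝ}
    (hA : ∀ v : n → ℝ, ∑ i, v i ^ 2 ≤ v ⬝ᵥ A *ᵥ v) (u : n → ℝ) :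
    u ⬝ᵥ A *ᵥ u ≤ ∑ i, (A *ᵥ u) i ^ 2 := by
  have hCS : (u ⬝ᵥ A *ᵥ u) ^ 2 ≤ (∑ i, u i ^ 2) * ∑ i, (A *ᵥ u) i ^ 2 :=
    Finset.sum_mul_sq_le_sq_mul_sq _ _ _
  have hu0 : 0 ≤ ∑ i, u i ^ 2 := Finset.sum_nonneg fun i _ => sq_nonneg _
  nlinarith [hA u, Finset.sum_nonneg fun i (_ : i ∈ Finset.univ) => sq_nonneg ((A *ᵥ u) i)]

end Matrix

theorem blockPart_add {m k : ℕ} (β : Fin m → Fin k) (M N : Matrix (Fin m) (Fin m) ℝ) :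
    blockPart β (M + N) = blockPart β M + blockPart β N := by
  ext a b
  by_cases h : β a = β b <;> simp [blockPart, h]

/-- `blockPart β M` is the Schur product of `M` with the Gram matrix of the block indicators. -/
theorem posSemidef_blockPart {m k : ℕ} (β : Fin m → Fin k) {M : Matrix (Fin m) (Fin m) ℝ}
    (hM : M.PosSemidef) : (blockPart β M).PosSemidef := by
  set B : Matrix (Fin m) (Fin k) ℝ := of fun a i => if β a = i then 1 else 0
  have hB : blockPart β M = (B * Bᵀ) ⊙ M := by
    ext a b
    by_cases h : β a = β b <;> simp [blockPart, B, mul_apply, h]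
  rw [hB]
  exact (posSemidef_self_mul_conjTranspose B).hadamard hM

section GeneralizedEigenbasis

variable {p : ℕ} {S S0 K : Matrix (Fin p) (Fin p) ℝ} {lam : Fin p → ℝ}

theorem dotProduct_mulVec_eq_sum_sq (hKnorm : Kᵀ * S0 * K = 1) (c : Fin p → ℝ) :
    K *ᵥ c ⬝ᵥ S0 *ᵥ (K *ᵥ c) = ∑ i, c i ^ 2 := by
  rw [← dotProduct_transpose_mul_mul_mulVec, hKnorm, one_mulVec, dotProduct_self_eq_sum_sq]

theorem dotProduct_mulVec_eq_sum_mul_sq (hKS : Kᵀ * S * K = diagonal lam) (c : Fin p → ℝ) :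
    K *ᵥ c ⬝ᵥ S *ᵥ (K *ᵥ c) = ∑ i, lam i * c i ^ 2 := by
  rw [← dotProduct_transpose_mul_mul_mulVec, hKS, dotProduct_diagonal_mulVec]

/-- The range of `f` meets the span of the `K e_i` with `i ≥ j`, on which
`xᵀ S x ≤ lam j · xᵀ S0 x`. -/
theorem one_lt_of_lt_on_range (hKnorm : Kᵀ * S0 * K = 1) (hKS : Kᵀ * S * K = diagonal lam)
    (hlam : Antitone lam) {m : ℕ} (f : (Fin m → ℝ) →ₗ[ℝ] Fin p → ℝ) {j : Fin p}
    (hj : (j : ℕ) < m)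
    (hf : ∀ u, u ≠ 0 → f u ⬝ᵥ S0 *ᵥ f u < f u ⬝ᵥ S *ᵥ f u) : 1 < lam j := by
  by_contra! hj1
  set C := Kᵀ * S0
  obtain ⟨u, hu, hu0⟩ := (Submodule.ne_bot_iff _).mp <| LinearMap.ker_ne_bot_of_finrank_lt
    (f := LinearMap.funLeft ℝ ℝ (Fin.castLE j.isLt.le) ∘ₗ C.mulVecLin ∘ₗ f) (by simpa using hj)
  set c := C *ᵥ f u
  have hc : ∀ i : Fin p, i < j → c i = 0 := fun i hi => congrFun hu ⟨i, hi⟩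
  have hfu : f u = K *ᵥ c := by rw [mulVec_mulVec, mul_eq_one_comm.mp hKnorm, one_mulVec]
  have hlt := hf u hu0
  rw [hfu, dotProduct_mulVec_eq_sum_sq hKnorm, dotProduct_mulVec_eq_sum_mul_sq hKS] at hlt
  refine hlt.not_ge (Finset.sum_le_sum fun i _ => ?_)
  rcases lt_or_ge i j with hi | hi
  · simp [hc i hi]
  · nlinarith [hlam hi, sq_nonneg (c i)]

/-- `ker g` meets the span of the `K e_i` with `i ≤ j`, on which `xᵀ S x ≥ lam j · xᵀ S0 x`. -/
theorem le_one_of_le_on_ker (hKnorm : Kᵀ * S0 * K = 1) (hKS : Kᵀ * S * K = diagonal lam)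
    (hlam : Antitone lam) {m : ℕ} (g : (Fin p → ℝ) →ₗ[ℝ] Fin m → ℝ) {j : Fin p}
    (hj : m ≤ (j : ℕ))
    (hg : ∀ x, g x = 0 → x ⬝ᵥ S *ᵥ x ≤ x ⬝ᵥ S0 *ᵥ x) : lam j ≤ 1 := by
  by_contra! hj1
  set ι := Fin.castLE (Nat.succ_le_of_lt j.isLt)
  have hι : Function.Injective ι := Fin.castLE_injective _
  obtain ⟨d, hd, hd0⟩ := (Submodule.ne_bot_iff _).mp <| LinearMap.ker_ne_bot_of_finrank_lt
    (f := g ∘ₗ K.mulVecLin ∘ₗ Function.ExtendByZero.linearMap ℝ ι)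
    (by simpa using Nat.lt_succ_of_le hj)
  set c := Function.extend ι d 0
  have hc : ∀ i : Fin p, j < i → c i = 0 := fun i hi =>
    Function.extend_apply' _ _ _ fun ⟨a, ha⟩ =>
      (ha ▸ hi).not_ge (Fin.le_iff_val_le_val.mpr (Nat.lt_succ_iff.mp a.isLt))
  have hcd : c ≠ 0 := fun h => hd0 (funext fun a => by
    simpa [c, hι.extend_apply] using congrFun h (ι a))
  have hle : K *ᵥ c ⬝ᵥ S *ᵥ (K *ᵥ c) ≤ K *ᵥ c ⬝ᵥ S0 *ᵥ (K *ᵥ c) := hg _ hd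
  rw [dotProduct_mulVec_eq_sum_sq hKnorm, dotProduct_mulVec_eq_sum_mul_sq hKS] at hle
  have hlam1 : ∀ i : Fin p, c i ≠ 0 → 1 < lam i := fun i hi =>
    hj1.trans_le (hlam (not_lt.mp fun h => hi (hc i h)))
  obtain ⟨i0, hi0⟩ := Function.ne_iff.mp hcd
  refine hle.not_gt (Finset.sum_lt_sum (fun i _ => ?_) ⟨i0, Finset.mem_univ _, ?_⟩)
  · by_cases hi : c i = 0
    · simp [hi]
    · nlinarith [hlam1 i hi, sq_nonneg (c i)]
  · nlinarith [hlam1 i0 hi0, sq_pos_of_ne_zero hi0]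

end GeneralizedEigenbasis

section LatentModel

variable {n m : Type*} [Fintype n] [Fintype m] {U : Matrix n m ℝ}
  {Ψ S0 : Matrix n n ℝ}

/-- For `x = S0⁻¹ U u`, `xᵀ S0 x = uᵀ A u` and `Uᵀ x = A u` with `A = Uᵀ S0⁻¹ U ⪰ 1`, so
Cauchy–Schwarz gives `xᵀ U Uᵀ x ≥ xᵀ S0 x`; `Ψ ≻ 0` makes it strict. -/
theorem dotProduct_mulVec_lt_of_one_le [DecidableEq n] (hS0 : IsUnit S0.det) (hΨ : Ψ.PosDef)
    (hA : ∀ v : m → ℝ, ∑ j, v j ^ 2 ≤ v ⬝ᵥ (Uᵀ * S0⁻¹ * U) *ᵥ v) {u : m → ℝ} (hu : u ≠ 0) :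
    (S0⁻¹ * U) *ᵥ u ⬝ᵥ S0 *ᵥ ((S0⁻¹ * U) *ᵥ u) <
      (S0⁻¹ * U) *ᵥ u ⬝ᵥ (U * Uᵀ + Ψ) *ᵥ ((S0⁻¹ * U) *ᵥ u) := by
  set A := Uᵀ * S0⁻¹ * U
  set x := (S0⁻¹ * U) *ᵥ u
  have hUx : Uᵀ *ᵥ x = A *ᵥ u := by simp only [x, A, mulVec_mulVec, Matrix.mul_assoc]
  have hS0x : x ⬝ᵥ S0 *ᵥ x = u ⬝ᵥ A *ᵥ u := by
    rw [← hUx, dotProduct_transpose_mulVec, mulVec_mulVec, ← Matrix.mul_assoc,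
      mul_nonsing_inv _ hS0, Matrix.one_mul]
  have huu : 0 < ∑ j, u j ^ 2 := by
    simpa [dotProduct_self_eq_sum_sq] using dotProduct_self_star_pos_iff.mpr hu
  have hx : x ≠ 0 := fun h => by
    rw [h, zero_dotProduct] at hS0x
    linarith [hA u]
  have hΨx : 0 < x ⬝ᵥ Ψ *ᵥ x := by simpa using hΨ.dotProduct_mulVec_pos hx
  rw [add_mulVec, dotProduct_add, dotProduct_mul_transpose_mulVec, hUx,
    dotProduct_self_eq_sum_sq, hS0x]
  linarith [dotProduct_mulVec_le_sum_sq_mulVec hA u]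

theorem dotProduct_mulVec_le_of_transpose_mulVec_eq_zero {D : Matrix n n ℝ}
    (hD : D.PosSemidef) {x : n → ℝ} (hx : Uᵀ *ᵥ x = 0) :
    x ⬝ᵥ (U * Uᵀ + Ψ) *ᵥ x ≤ x ⬝ᵥ (D + Ψ) *ᵥ x := by
  rw [add_mulVec, add_mulVec, dotProduct_add, dotProduct_add, dotProduct_mul_transpose_mulVec,
    hx, zero_dotProduct]
  simpa using hD.dotProduct_mulVec_nonneg x

end LatentModel

theorem statement1_general
    (k p r : ℕ)
    (β : Fin p → Fin k)
    (U : Matrix (Fin p) (Fin r) ℝ)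
    (Ψ : Matrix (Fin p) (Fin p) ℝ) (hΨblock : blockPart β Ψ = Ψ) (hΨpd : Ψ.PosDef)
    (S S0 : Matrix (Fin p) (Fin p) ℝ)
    (hS : S = U * Uᵀ + Ψ) (hS0 : S0 = blockPart β S)
    (K : Matrix (Fin p) (Fin p) ℝ) (lam : Fin p → ℝ) (hlam : Antitone lam)
    (hKnorm : Kᵀ * S0 * K = 1) (hKdec : S = S0 * K * Matrix.diagonal lam * Kᵀ * S0)
    -- Assumption (b): `σ_r(S0^{-1/2} U) ≥ 1`, i.e. `λ_min(Uᵀ S0⁻¹ U) ≥ 1`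
    (hsig : ∀ v : Fin r → ℝ, (∑ j, v j ^ 2) ≤ v ⬝ᵥ (Uᵀ * S0⁻¹ * U).mulVec v) :
    (∀ j : Fin p, (j : ℕ) < r → 1 < lam j) ∧ (∀ j : Fin p, r ≤ (j : ℕ) → lam j ≤ 1) := by
  have hKS : Kᵀ * S * K = diagonal lam := by
    have : Kᵀ * S * K = (Kᵀ * S0 * K) * diagonal lam * (Kᵀ * S0 * K) := by
      rw [hKdec]; simp only [Matrix.mul_assoc]
    rw [this, hKnorm, Matrix.one_mul, Matrix.mul_one]
  have hS0det : IsUnit S0.det :=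
    isUnit_det_of_left_inverse (B := K * Kᵀ) <| by
      rw [Matrix.mul_assoc]; exact mul_eq_one_comm.mp hKnorm
  have hS0_split : S0 = blockPart β (U * Uᵀ) + Ψ := by rw [hS0, hS, blockPart_add, hΨblock]
  refine ⟨fun j hj => one_lt_of_lt_on_range hKnorm hKS hlam (S0⁻¹ * U).mulVecLin hj ?_,
    fun j hj => le_one_of_le_on_ker hKnorm hKS hlam Uᵀ.mulVecLin hj ?_⟩
  · intro u hu
    rw [hS]
    exact dotProduct_mulVec_lt_of_one_le hS0det hΨpd hsig hu
  · intro x hx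
    rw [hS, hS0_split]
    exact dotProduct_mulVec_le_of_transpose_mulVec_eq_zero
      (posSemidef_blockPart β (posSemidef_self_mul_conjTranspose U)) hx

/-- exactly `r` generalized eigenvalues exceed one in the latent variable model. -/
theorem statement1
    (k p r : ℕ) (hk : 2 ≤ k) (hr : 1 ≤ r) (hrp : r ≤ p)
    (p_ : Fin k → ℕ) (hp : p = ∑ i, p_ i)
    (β : Fin p → Fin k) (hβ : ∀ i : Fin k, ({a : Fin p | β a = i}).ncard = p_ i)
    (U : Matrix (Fin p) (Fin r) ℝ)
    (Ψ : Matrix (Fin p) (Fin p) ℝ) (hΨblock : blockPart β Ψ = Ψ) (hΨpd : Ψ.PosDef)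
    (S S0 : Matrix (Fin p) (Fin p) ℝ)
    (hS : S = U * Uᵀ + Ψ) (hS0 : S0 = blockPart β S)
    (K : Matrix (Fin p) (Fin p) ℝ) (lam : Fin p → ℝ) (hlam : Antitone lam)
    (hKnorm : Kᵀ * S0 * K = 1) (hKdec : S = S0 * K * Matrix.diagonal lam * Kᵀ * S0)
    -- Assumption (a): `U` has full column rank
    (hUrank : U.rank = r)
    -- Assumption (b): `σ_r(S0^{-1/2} U) ≥ 1`, i.e. `λ_min(Uᵀ S0⁻¹ U) ≥ 1`
    (hsig : ∀ v : Fin r → ℝ, (∑ j, v j ^ 2) ≤ v ⬝ᵥ (Uᵀ * S0⁻¹ * U).mulVec v) :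
    (∀ j : Fin p, (j : ℕ) < r → 1 < lam j) ∧ (∀ j : Fin p, r ≤ (j : ℕ) → lam j ≤ 1) :=
  statement1_general k p r β U Ψ hΨblock hΨpd S S0 hS hS0 K lam hlam hKnorm hKdec hsig

end
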